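/- arXiv:1904.11415 — 3 statements merged into one kernel-verified Lean document; each statement's English description precedes it below -/
import Mathlib

section
/- Let Y be a nonnegative random variable with E[Y] = μ > 0, tail function F̄(t) = P(Y > t), and suppose constants λ, c, R > 0 satisfy the net profit condition c > λμ and the Cramér condition λ·E[e^{RY} - 1] = c·R. Then the function H(x) := 1 - (λ/(c - λμ)) ∫₀^∞ (e^{Rz} - 1) F̄(z + x) dz, defined for x ≥ 0, satisfies H(0) = 0, H is nondecreasing, continuous, and lim_{x→∞} H(x) = 1; i.e., H is the distribution function of a probability measure on [0, ∞). -/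
/-!
With `φ(t) = ∫₀^{t⁺} (e^{Rz} - 1) dz`, the layer-cake formula turns the integral defining `H x`
into `E[φ(Y - x)]`. The function `φ` is continuous, nondecreasing, vanishes on `(-∞, 0]` and is
bounded by `e^{Rt} / R`, so dominated convergence gives continuity of `H` and `H x → 1`, while
monotonicity of `φ` gives that of `H`. At `x = 0` the Cramér condition gives
`E[φ(Y)] = (E[e^{RY}] - 1) / R - μ = (c - λμ) / λ`, that is `H 0 = 0`.
-/

open Real Filter Topology MeasureTheory Set

theorem integral_exp_mul_sub_one {R : ℝ} (hR : R ≠ 0) (a b : ℝ) :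
    ∫ z in a..b, (exp (R * z) - 1) =
      ((exp (R * b) - 1) / R - b) - ((exp (R * a) - 1) / R - a) := by
  rw [intervalIntegral.integral_sub
    (Continuous.intervalIntegrable (by fun_prop) a b) intervalIntegrable_const,
    intervalIntegral.integral_comp_mul_left (fun z => exp z) hR, integral_exp,
    intervalIntegral.integral_const, smul_eq_mul, smul_eq_mul, mul_one]
  field_simp
  ring

theorem exp_mul_sub_one_nonneg {R z : ℝ} (hR : 0 ≤ R) (hz : 0 ≤ z) : 0 ≤ exp (R * z) - 1 :=
  sub_nonneg.2 (one_le_exp (mul_nonneg hR hz))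

noncomputable def expExcessIntegral (R t : ℝ) : ℝ := (exp (R * max t 0) - 1) / R - max t 0

section expExcessIntegral

variable {R : ℝ}

theorem expExcessIntegral_eq_intervalIntegral (hR : R ≠ 0) (t : ℝ) :
    expExcessIntegral R t = ∫ z in (0 : ℝ)..max t 0, (exp (R * z) - 1) := by
  simp [integral_exp_mul_sub_one hR, expExcessIntegral]

theorem expExcessIntegral_of_nonpos {t : ℝ} (ht : t ≤ 0) : expExcessIntegral R t = 0 := by
  simp [expExcessIntegral, max_eq_right ht]

theorem continuous_expExcessIntegral (R : ℝ) : Continuous (expExcessIntegral R) := by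
  unfold expExcessIntegral
  fun_prop

theorem monotone_expExcessIntegral (hR : 0 < R) : Monotone (expExcessIntegral R) := by
  intro s t hst
  rw [expExcessIntegral_eq_intervalIntegral hR.ne', expExcessIntegral_eq_intervalIntegral hR.ne']
  refine intervalIntegral.integral_mono_interval le_rfl (le_max_right s 0) (max_le_max_right 0 hst)
    ?_ (Continuous.intervalIntegrable (by fun_prop) _ _)
  exact (ae_restrict_iff' measurableSet_Ioc).2 <| .of_forall fun z hz =>
    exp_mul_sub_one_nonneg hR.le hz.1.le

theorem expExcessIntegral_nonneg (hR : 0 < R) (t : ℝ) : 0 ≤ expExcessIntegral R t :=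
  (expExcessIntegral_of_nonpos (min_le_right t 0)).symm.trans_le
    (monotone_expExcessIntegral hR (min_le_left t 0))

theorem expExcessIntegral_le (hR : 0 < R) (t : ℝ) : expExcessIntegral R t ≤ exp (R * t) / R := by
  rcases le_total t 0 with ht | ht
  · rw [expExcessIntegral_of_nonpos ht]
    positivity
  · rw [expExcessIntegral, max_eq_left ht, sub_div]
    linarith [one_div_pos.2 hR]

end expExcessIntegral

section Expectation

variable {Ω : Type*} [MeasurableSpace Ω] {P : Measure Ω} {R : ℝ}

theorem integral_exp_sub_one_mul_measureReal_lt [IsFiniteMeasure P] (hR : 0 < R) {f : Ω → ℝ}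
    (hf : Measurable f) :
    ∫ z in Ioi 0, (exp (R * z) - 1) * P.real {ω | z < f ω} =
      ∫ ω, expExcessIntegral R (f ω) ∂P := by
  have htail : Measurable fun z : ℝ => P.real {ω | z < f ω} :=
    Antitone.measurable fun s t hst => measureReal_mono fun ω (h : t < f ω) => hst.trans_lt h
  have hweight : ∀ᵐ z ∂volume.restrict (Ioi (0 : ℝ)), 0 ≤ exp (R * z) - 1 :=
    (ae_restrict_iff' measurableSet_Ioi).2 <| .of_forall fun z hz =>
      exp_mul_sub_one_nonneg hR.le (le_of_lt hz)
  have hlayer := lintegral_comp_eq_lintegral_meas_lt_mul P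
    (.of_forall fun ω => le_max_right (f ω) 0) (hf.max measurable_const).aemeasurable
    (fun t _ => Continuous.intervalIntegrable (by fun_prop) 0 t) hweight
  rw [integral_eq_lintegral_of_nonneg_ae (hweight.mono fun z hz => mul_nonneg hz measureReal_nonneg)
      (Measurable.aestronglyMeasurable (by fun_prop)),
    integral_eq_lintegral_of_nonneg_ae (.of_forall fun ω => expExcessIntegral_nonneg hR _)
      ((continuous_expExcessIntegral R).measurable.comp hf).aestronglyMeasurable]
  simp_rw [expExcessIntegral_eq_intervalIntegral hR.ne', hlayer]
  congr 1
  refine setLIntegral_congr_fun measurableSet_Ioi fun z (hz : 0 < z) => ?_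
  have hset : {ω | z < max (f ω) 0} = {ω | z < f ω} := by
    ext ω
    simp [hz.not_gt]
  rw [hset, ENNReal.ofReal_mul (exp_mul_sub_one_nonneg hR.le hz.le), measureReal_def,
    ENNReal.ofReal_toReal (measure_ne_top _ _), mul_comm]


variable {Y : Ω → ℝ}

theorem integrable_expExcessIntegral_sub (hR : 0 < R) (hY : Measurable Y)
    (hexp : Integrable (fun ω => exp (R * Y ω)) P) {x : ℝ} (hx : 0 ≤ x) :
    Integrable (fun ω => expExcessIntegral R (Y ω - x)) P := by
  refine (hexp.div_const R).mono
    ((continuous_expExcessIntegral R).measurable.comp (hY.sub_const x)).aestronglyMeasurable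
    (.of_forall fun ω => ?_)
  rw [norm_of_nonneg (expExcessIntegral_nonneg hR _), norm_of_nonneg (by positivity)]
  exact (monotone_expExcessIntegral hR (by linarith)).trans (expExcessIntegral_le hR (Y ω))

theorem antitoneOn_integral_expExcessIntegral_sub (hR : 0 < R) (hY : Measurable Y)
    (hexp : Integrable (fun ω => exp (R * Y ω)) P) :
    AntitoneOn (fun x => ∫ ω, expExcessIntegral R (Y ω - x) ∂P) (Ici 0) :=
  fun x hx y hy hxy => integral_mono (integrable_expExcessIntegral_sub hR hY hexp hy)
    (integrable_expExcessIntegral_sub hR hY hexp hx)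
    fun ω => monotone_expExcessIntegral hR (by linarith)

theorem tendsto_integral_expExcessIntegral_sub {l : Filter ℝ} [l.IsCountablyGenerated]
    (hR : 0 < R) (hY : Measurable Y) (hexp : Integrable (fun ω => exp (R * Y ω)) P)
    (hl : ∀ᶠ x in l, 0 ≤ x) {g : Ω → ℝ}
    (hg : ∀ ω, Tendsto (fun x => expExcessIntegral R (Y ω - x)) l (𝓝 (g ω))) :
    Tendsto (fun x => ∫ ω, expExcessIntegral R (Y ω - x) ∂P) l (𝓝 (∫ ω, g ω ∂P)) := by
  refine tendsto_integral_filter_of_dominated_convergence (fun ω => exp (R * Y ω) / R)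
    (.of_forall fun x =>
      ((continuous_expExcessIntegral R).measurable.comp (hY.sub_const x)).aestronglyMeasurable)
    (hl.mono fun x hx => .of_forall fun ω => ?_) (hexp.div_const R) (.of_forall hg)
  rw [norm_of_nonneg (expExcessIntegral_nonneg hR _)]
  exact (monotone_expExcessIntegral hR (by linarith)).trans (expExcessIntegral_le hR (Y ω))

theorem continuousOn_integral_expExcessIntegral_sub (hR : 0 < R) (hY : Measurable Y)
    (hexp : Integrable (fun ω => exp (R * Y ω)) P) :
    ContinuousOn (fun x => ∫ ω, expExcessIntegral R (Y ω - x) ∂P) (Ici 0) :=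
  fun _ _ => tendsto_integral_expExcessIntegral_sub hR hY hexp self_mem_nhdsWithin fun _ =>
    ((continuous_expExcessIntegral R).tendsto _).comp
      ((tendsto_const_nhds.sub tendsto_id).mono_left nhdsWithin_le_nhds)

theorem tendsto_integral_expExcessIntegral_sub_atTop (hR : 0 < R) (hY : Measurable Y)
    (hexp : Integrable (fun ω => exp (R * Y ω)) P) :
    Tendsto (fun x => ∫ ω, expExcessIntegral R (Y ω - x) ∂P) atTop (𝓝 0) := by
  simpa using tendsto_integral_expExcessIntegral_sub hR hY hexp (eventually_ge_atTop 0)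
    fun ω => tendsto_const_nhds.congr' <| (eventually_ge_atTop (Y ω)).mono fun x hx =>
      (expExcessIntegral_of_nonpos (sub_nonpos.2 hx)).symm

theorem integral_expExcessIntegral [IsProbabilityMeasure P] (hY₀ : ∀ ω, 0 ≤ Y ω)
    (hYint : Integrable Y P) (hexp : Integrable (fun ω => exp (R * Y ω)) P) :
    ∫ ω, expExcessIntegral R (Y ω) ∂P = ((∫ ω, exp (R * Y ω) ∂P) - 1) / R - ∫ ω, Y ω ∂P := by
  simp only [expExcessIntegral, max_eq_left (hY₀ _)]
  rw [integral_sub (f := fun ω => (exp (R * Y ω) - 1) / R)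
      ((hexp.sub (integrable_const 1)).div_const R) hYint, integral_div,
    integral_sub hexp (integrable_const 1), integral_const, probReal_univ, one_smul]

end Expectation

theorem limiting_overshoot_is_distribution_general
    {Ω : Type*} [MeasureSpace Ω] [IsProbabilityMeasure (volume : Measure Ω)]
    (Y : Ω → ℝ) (hYmeas : Measurable Y) (hYnonneg : ∀ ω, 0 ≤ Y ω)
    (lam c R μ : ℝ) (hlam : 0 < lam) (hR : 0 < R)
    (hYint : Integrable Y) (hμ : μ = ∫ ω, Y ω)
    (hexpint : Integrable (fun ω => Real.exp (R * Y ω)))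
    (hcramer : lam * ((∫ ω, Real.exp (R * Y ω)) - 1) = c * R)
    (hnet : lam * μ < c)
    (Fbar : ℝ → ℝ) (hFbar : ∀ t, Fbar t = ((volume : Measure Ω) {ω | Y ω > t}).toReal)
    (H : ℝ → ℝ)
    (hH : ∀ x, H x = 1 - (lam / (c - lam * μ)) *
        ∫ z in Ioi (0 : ℝ), (Real.exp (R * z) - 1) * Fbar (z + x)) :
    H 0 = 0 ∧ MonotoneOn H (Ici 0) ∧ ContinuousOn H (Ici 0) ∧
      Tendsto H atTop (𝓝 1) := by
  set G := fun x => ∫ ω, expExcessIntegral R (Y ω - x)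
  have hHG : H = fun x => 1 - lam / (c - lam * μ) * G x := by
    ext x
    have hFbar' : ∀ z, Fbar (z + x) = volume.real {ω | z < Y ω - x} := fun z => by
      simp only [hFbar, measureReal_def, gt_iff_lt, lt_sub_iff_add_lt]
    simp only [hH, hFbar', integral_exp_sub_one_mul_measureReal_lt hR (hYmeas.sub_const x), G]
  have hG0 : G 0 = (c - lam * μ) / lam := by
    simp only [G, sub_zero, integral_expExcessIntegral hYnonneg hYint hexpint, ← hμ]
    field_simp
    linarith
  have hK : 0 ≤ lam / (c - lam * μ) := div_nonneg hlam.le (by linarith)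
  subst hHG
  refine ⟨?_, ?_, ?_, ?_⟩
  · show 1 - _ * G 0 = 0
    rw [hG0, div_mul_div_cancel₀ (by linarith : c - lam * μ ≠ 0), div_self hlam.ne', sub_self]
  · refine fun x hx y hy hxy => ?_
    beta_reduce
    gcongr 1 - _ * ?_
    exact antitoneOn_integral_expExcessIntegral_sub hR hYmeas hexpint hx hy hxy
  · exact continuousOn_const.sub
      (continuousOn_const.mul (continuousOn_integral_expExcessIntegral_sub hR hYmeas hexpint))
  · simpa using tendsto_const_nhds.sub
      (tendsto_const_nhds.mul (tendsto_integral_expExcessIntegral_sub_atTop hR hYmeas hexpint))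

theorem limiting_overshoot_is_distribution
    {Ω : Type*} [MeasureSpace Ω] [IsProbabilityMeasure (volume : Measure Ω)]
    (Y : Ω → ℝ) (hYmeas : Measurable Y) (hYnonneg : ∀ ω, 0 ≤ Y ω)
    (lam c R μ : ℝ) (hlam : 0 < lam) (hc : 0 < c) (hR : 0 < R)
    (hYint : Integrable Y) (hμ : μ = ∫ ω, Y ω) (hμpos : 0 < μ)
    (hexpint : Integrable (fun ω => Real.exp (R * Y ω)))
    (hcramer : lam * ((∫ ω, Real.exp (R * Y ω)) - 1) = c * R)
    (hnet : lam * μ < c)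
    (Fbar : ℝ → ℝ) (hFbar : ∀ t, Fbar t = ((volume : Measure Ω) {ω | Y ω > t}).toReal)
    (H : ℝ → ℝ)
    (hH : ∀ x, H x = 1 - (lam / (c - lam * μ)) *
        ∫ z in Ioi (0 : ℝ), (Real.exp (R * z) - 1) * Fbar (z + x)) :
    H 0 = 0 ∧ MonotoneOn H (Ici 0) ∧ ContinuousOn H (Ici 0) ∧
      Tendsto H atTop (𝓝 1) :=
  limiting_overshoot_is_distribution_general Y hYmeas hYnonneg lam c R μ hlam hR hYint hμ hexpint
    hcramer hnet Fbar hFbar H hH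
end

section
/- Under the hypotheses of the renewal relation (ψ(u) = ∫_{(-∞,0)} ψ(y) dμ_u(y) with μ_u of total mass ψ_cl(u) > 0, 1 - ψ(y) = p_y(1 - ψ(0)) for y < 0, p₀ := ∫ p dμ₀ < 1, q₀ := (1 - ψ_cl(0))/(1 - p₀)), one has for every u ≥ 0: ψ(u) = ψ_cl(u) · (1 - q₀ · ∫_{(-∞,0)} p_y d ν_u(y)), where ν_u := μ_u / ψ_cl(u) is the normalized probability measure. -/
open Real Filter Topology MeasureTheory Set

/-!
Since every `μ u` lives on `(-∞, 0)`, the renewal relation lets us replace `ψ` by the affine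
expression `1 - p y (1 - ψ 0)` under the integral, so `ψ u = ψcl u - (1 - ψ 0) ∫ p dμ_u` for
`u ≥ 0`. Evaluating this at `u = 0` gives `(1 - ψ 0)(1 - p₀) = 1 - ψcl 0`, i.e. `1 - ψ 0 = q₀`,
and dividing the mass `ψcl u` out of `μ u` yields the formula.
-/

lemma ae_lt_of_measure_Ici_eq_zero {μ : Measure ℝ} {a : ℝ} (h : μ (Ici a) = 0) :
    ∀ᵐ y ∂μ, y < a := by
  simpa only [ae_iff, not_lt, ← Ici_def] using h

lemma integrable_of_ae_mem_Icc {α : Type*} [MeasurableSpace α] {μ : Measure α}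
    [IsFiniteMeasure μ] {f : α → ℝ} (hf : Measurable f) (h01 : ∀ᵐ x ∂μ, f x ∈ Icc (0 : ℝ) 1) :
    Integrable f μ :=
  Integrable.of_bound hf.aestronglyMeasurable 1 <| h01.mono fun _ hx => by
    rw [Real.norm_eq_abs, abs_of_nonneg hx.1]; exact hx.2

lemma integral_eq_measureReal_univ_sub_of_renewal {μ : Measure ℝ} [IsFiniteMeasure μ]
    (hμ : μ (Ici 0) = 0) {ψ p : ℝ → ℝ} (hp : Measurable p)
    (hp01 : ∀ y < 0, p y ∈ Icc (0 : ℝ) 1) (hrenew : ∀ y < 0, 1 - ψ y = p y * (1 - ψ 0)) :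
    ∫ y, ψ y ∂μ = μ.real univ - (1 - ψ 0) * ∫ y, p y ∂μ := by
  have hneg := ae_lt_of_measure_Ici_eq_zero hμ
  have hψ : ψ =ᵐ[μ] fun y => 1 - p y * (1 - ψ 0) :=
    hneg.mono fun y hy => by linarith [hrenew y hy]
  have hpint : Integrable p μ :=
    integrable_of_ae_mem_Icc hp (hneg.mono fun y hy => hp01 y hy)
  rw [integral_congr_ae hψ, integral_sub (integrable_const 1) (hpint.mul_const _),
    integral_const, integral_mul_const, smul_eq_mul, mul_one]
  ring

lemma integral_normalized_measure {α : Type*} [MeasurableSpace α] (μ : Measure α)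
    (f : α → ℝ) {c : ℝ} (hc : 0 ≤ c) :
    ∫ x, f x ∂(ENNReal.ofReal c⁻¹ • μ) = c⁻¹ * ∫ x, f x ∂μ := by
  rw [integral_smul_measure, ENNReal.toReal_ofReal (inv_nonneg.2 hc), smul_eq_mul]

theorem renewal_psi_formula_general
    (ψ ψcl : ℝ → ℝ)
    (hψclpos : ∀ u, 0 < ψcl u)
    (μ : ℝ → Measure ℝ) (hμfin : ∀ u, IsFiniteMeasure (μ u))
    (hμsupp : ∀ u, μ u (Ici 0) = 0)
    (hμmass : ∀ u, ((μ u) Set.univ).toReal = ψcl u)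
    (hmodel : ∀ u ≥ 0, ψ u = ∫ y, ψ y ∂(μ u))
    (p : ℝ → ℝ) (hpmeas : Measurable p) (hp01 : ∀ y < 0, p y ∈ Icc (0 : ℝ) 1)
    (hrenew : ∀ y < 0, 1 - ψ y = p y * (1 - ψ 0))
    (p₀ : ℝ) (hp₀ : p₀ = ∫ y, p y ∂(μ 0)) (hp₀lt : p₀ < 1)
    (q₀ : ℝ) (hq₀ : q₀ = (1 - ψcl 0) / (1 - p₀)) :
    ∀ u ≥ (0 : ℝ),
      ψ u = ψcl u *
        (1 - q₀ * ∫ y, p y ∂(ENNReal.ofReal (ψcl u)⁻¹ • μ u)) := by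
  have hkey : ∀ u ≥ (0 : ℝ), ψ u = ψcl u - (1 - ψ 0) * ∫ y, p y ∂(μ u) := fun u hu => by
    have := hμfin u
    rw [hmodel u hu, integral_eq_measureReal_univ_sub_of_renewal (hμsupp u) hpmeas hp01 hrenew,
      measureReal_def, hμmass u]
  have hq : 1 - ψ 0 = q₀ := by
    have h0 := hkey 0 le_rfl
    rw [← hp₀] at h0
    rw [hq₀, eq_div_iff (sub_ne_zero.2 hp₀lt.ne')]
    linear_combination -h0
  intro u hu
  rw [integral_normalized_measure _ _ (hψclpos u).le, hkey u hu, hq]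
  field_simp [(hψclpos u).ne']

theorem renewal_psi_formula
    (ψ ψcl : ℝ → ℝ) (hψmeas : Measurable ψ)
    (hψ01 : ∀ u, ψ u ∈ Icc (0 : ℝ) 1) (hψcl01 : ∀ u, ψcl u ∈ Icc (0 : ℝ) 1)
    (hψclpos : ∀ u, 0 < ψcl u)
    (μ : ℝ → Measure ℝ) (hμfin : ∀ u, IsFiniteMeasure (μ u))
    (hμsupp : ∀ u, μ u (Ici 0) = 0)
    (hμmass : ∀ u, ((μ u) Set.univ).toReal = ψcl u)
    (hmodel : ∀ u ≥ 0, ψ u = ∫ y, ψ y ∂(μ u))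
    (p : ℝ → ℝ) (hpmeas : Measurable p) (hp01 : ∀ y < 0, p y ∈ Icc (0 : ℝ) 1)
    (hrenew : ∀ y < 0, 1 - ψ y = p y * (1 - ψ 0))
    (p₀ : ℝ) (hp₀ : p₀ = ∫ y, p y ∂(μ 0)) (hp₀lt : p₀ < 1)
    (q₀ : ℝ) (hq₀ : q₀ = (1 - ψcl 0) / (1 - p₀)) :
    ∀ u ≥ (0 : ℝ),
      ψ u = ψcl u *
        (1 - q₀ * ∫ y, p y ∂(ENNReal.ofReal (ψcl u)⁻¹ • μ u)) :=
  renewal_psi_formula_general ψ ψcl hψclpos μ hμfin hμsupp hμmass hmodel p hpmeas hp01 hrenew p₀ hp₀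
    hp₀lt q₀ hq₀
end

section
/- In the renewal setting with constant investor probability p_y = p ∈ [0,1) for all y < 0, and with ψ_cl(0) = μλ/c where 0 < μλ/c < 1, one has p₀ = p·μλ/c and ψ(u) = ψ_cl(u)·(1 - p·(1 - μλ/c)/(1 - p·μλ/c)) for all u ≥ 0, where ψ satisfies the renewal relation with normalized measures ν_u (probability measures on (-∞,0)). -/
/-!
Every `ν u` lives on `(-∞, 0)`, where `ψ` is the constant `1 - p (1 - ψ 0)`, so the renewal
relation reads `ψ u = ψcl u * (1 - p (1 - ψ 0))`. At `u = 0` this is a linear equation for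
`ψ 0`, uniquely solvable because `p * ψcl 0 < 1`.
-/

open Real Filter Topology MeasureTheory Set

theorem integral_eq_of_forall_neg_eq {ν : Measure ℝ} [IsProbabilityMeasure ν]
    (hν : ν (Ici 0) = 0) {f : ℝ → ℝ} {a : ℝ} (hf : ∀ y < 0, f y = a) :
    ∫ y, f y ∂ν = a := by
  have hneg : ∀ᵐ y ∂ν, y < 0 := by
    rwa [ae_iff, show {y : ℝ | ¬y < 0} = Ici 0 from Set.ext fun _ => not_lt]
  calc ∫ y, f y ∂ν = ∫ _, a ∂ν := integral_congr_ae (hneg.mono hf)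
    _ = a := by simp

theorem one_sub_eq_of_eq_mul_one_sub_mul {p q x : ℝ} (hpq : p * q ≠ 1)
    (hx : x = q * (1 - p * (1 - x))) : 1 - x = (1 - q) / (1 - p * q) := by
  rw [eq_div_iff (sub_ne_zero.mpr hpq.symm)]
  linear_combination -hx

theorem constant_investor_probability_general
    (lam mu c p : ℝ) (hp : p ∈ Ico (0 : ℝ) 1)
    (ψ ψcl : ℝ → ℝ)
    (hψcl01 : ∀ u, ψcl u ∈ Icc (0 : ℝ) 1)
    (hψcl0 : ψcl 0 = mu * lam / c)
    (ν : ℝ → Measure ℝ) (hνprob : ∀ u, IsProbabilityMeasure (ν u))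
    (hνsupp : ∀ u, ν u (Ici 0) = 0)
    (hmodel : ∀ u ≥ 0, ψ u = ψcl u * ∫ y, ψ y ∂(ν u))
    (hrenew : ∀ y < (0 : ℝ), 1 - ψ y = p * (1 - ψ 0)) :
    p * ψcl 0 = p * mu * lam / c ∧
    ∀ u ≥ (0 : ℝ),
      ψ u = ψcl u * (1 - p * (1 - mu * lam / c) / (1 - p * (mu * lam / c))) := by
  have hint : ∀ u, ∫ y, ψ y ∂(ν u) = 1 - p * (1 - ψ 0) := fun u =>
    integral_eq_of_forall_neg_eq (hνsupp u) fun y hy => by linarith [hrenew y hy]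
  have hpq : p * ψcl 0 ≠ 1 :=
    (mul_lt_one_of_nonneg_of_lt_one_left hp.1 hp.2 (hψcl01 0).2).ne
  have hsurv : 1 - ψ 0 = (1 - ψcl 0) / (1 - p * ψcl 0) :=
    one_sub_eq_of_eq_mul_one_sub_mul hpq (by rw [← hint 0]; exact hmodel 0 le_rfl)
  refine ⟨by rw [hψcl0]; ring, fun u hu => ?_⟩
  rw [hmodel u hu, hint u, hsurv, mul_div_assoc', hψcl0]

theorem constant_investor_probability
    (lam mu c p : ℝ) (hlam : 0 < lam) (hmu : 0 < mu) (hc : 0 < c)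
    (hnet : lam * mu < c) (hp : p ∈ Ico (0 : ℝ) 1)
    (ψ ψcl : ℝ → ℝ) (hψ01 : ∀ u, ψ u ∈ Icc (0 : ℝ) 1)
    (hψcl01 : ∀ u, ψcl u ∈ Icc (0 : ℝ) 1)
    (hψcl0 : ψcl 0 = mu * lam / c)
    (ν : ℝ → Measure ℝ) (hνprob : ∀ u, IsProbabilityMeasure (ν u))
    (hνsupp : ∀ u, ν u (Ici 0) = 0)
    (hmodel : ∀ u ≥ 0, ψ u = ψcl u * ∫ y, ψ y ∂(ν u))
    (hrenew : ∀ y < (0 : ℝ), 1 - ψ y = p * (1 - ψ 0)) :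
    p * ψcl 0 = p * mu * lam / c ∧
    ∀ u ≥ (0 : ℝ),
      ψ u = ψcl u * (1 - p * (1 - mu * lam / c) / (1 - p * (mu * lam / c))) :=
  constant_investor_probability_general lam mu c p hp ψ ψcl hψcl01 hψcl0 ν hνprob hνsupp hmodel
    hrenew
end
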